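/- arXiv:2511.19345 — 7 statements merged into one kernel-verified Lean document; each statement's English description precedes it below -/
import Mathlib

section
/- Let n ≥ 1, let C be a pair order matrix of order n, and let U^C be its utopian matrix, defined entrywise by u_{rs} = u(c_{rs}). Then for every matrix B of order n whose entries lie in {0, 1/2, 1} and which satisfies b_{rr} = 1/2 for all r and b_{rs} + b_{sr} = 1 for all r ≠ s (in particular, for every bucket matrix B), one has D(B,C) = ∑_{r,s} |b_{rs} − c_{rs}| ≥ ∑_{r,s} |u_{rs} − c_{rs}| = D(U^C,C). -/
open Finset

/-- The utopian value of `c ∈ [0,1]`. -/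
noncomputable def utopia (c : ℝ) : ℝ :=
  if 3 / 4 < c then 1 else if 1 / 4 ≤ c then 1 / 2 else 0

lemma utopia_closest (c b : ℝ) (hc0 : 0 ≤ c) (hc1 : c ≤ 1)
    (hb : b = 0 ∨ b = 1 / 2 ∨ b = 1) :
    |utopia c - c| ≤ |b - c| := by
  rcases abs_cases (utopia c - c) with ⟨h1, h2⟩ | ⟨h1, h2⟩ <;>
  rcases abs_cases (b - c) with ⟨h3, h4⟩ | ⟨h3, h4⟩ <;>
  rcases hb with rfl | rfl | rfl <;>
  simp only [utopia] at * <;> split_ifs at * <;> linarith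

/-- The utopian matrix of a pair order matrix `C` is superoptimal:
for every matrix `B` with entries in `{0, 1/2, 1}`, diagonal `1/2` and
`b_{rs} + b_{sr} = 1` for `r ≠ s` (in particular every bucket matrix),
`D(B,C) ≥ D(U^C,C)`. -/
theorem stmt_3 (n : ℕ) (hn : 1 ≤ n)
    (C : Fin n → Fin n → ℝ)
    (hC01 : ∀ r s, 0 ≤ C r s ∧ C r s ≤ 1)
    (hCdiag : ∀ r, C r r = 1 / 2)
    (hCsym : ∀ r s, r ≠ s → C r s + C s r = 1)
    (B : Fin n → Fin n → ℝ)
    (hBval : ∀ r s, B r s = 0 ∨ B r s = 1 / 2 ∨ B r s = 1)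
    (hBdiag : ∀ r, B r r = 1 / 2)
    (hBsym : ∀ r s, r ≠ s → B r s + B s r = 1) :
    ∑ r, ∑ s, |utopia (C r s) - C r s| ≤ ∑ r, ∑ s, |B r s - C r s| := by
  refine Finset.sum_le_sum fun r _ => Finset.sum_le_sum fun s _ => ?_
  exact utopia_closest _ _ (hC01 r s).1 (hC01 r s).2 (hBval r s)
end

section
/- Let n ≥ 1 and p ≥ 1. Let x = (x_{rs}), r ≠ s in [[n]], and y = (y_{ru}), r ∈ [[n]], u ∈ [[p]], be binary variables satisfying: (i) ∑_{u=1}^p y_{ru} = 1 for every r; (ii) y_{ru} + y_{su} ≤ x_{rs} + x_{sr} for all r < s and all u ∈ [[p]]; and (iii) x_{sr} + ∑_{v=1}^{u} y_{rv} + ∑_{v=u+1}^{p} y_{sv} ≤ 2 for all r ≠ s and all u ∈ [[p−1]]. Then x satisfies the comparability constraints x_{rs} + x_{sr} ≥ 1 for all r ≠ s and the transitivity constraints x_{rs} + x_{st} ≤ 1 + x_{rt} for all pairwise distinct r, s, t. -/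
open Finset

/-- In the assignment-based p-bucket model, the comparability and
transitivity inequalities of the base weak-order model are valid. -/
theorem stmt_5 (n p : ℕ) (hn : 1 ≤ n) (hp : 1 ≤ p)
    (x : Fin n → Fin n → ℝ) (y : Fin n → Fin p → ℝ)
    (hxbin : ∀ r s, r ≠ s → x r s = 0 ∨ x r s = 1)
    (hybin : ∀ r u, y r u = 0 ∨ y r u = 1)
    (h1 : ∀ r, ∑ u, y r u = 1)
    (h2 : ∀ r s : Fin n, r < s → ∀ u : Fin p, y r u + y s u ≤ x r s + x s r)
    (h3 : ∀ r s : Fin n, r ≠ s → ∀ u : Fin p, (u : ℕ) < p - 1 →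
      x s r + (∑ v ∈ univ.filter (fun v => v ≤ u), y r v) +
        (∑ v ∈ univ.filter (fun v => u < v), y s v) ≤ 2) :
    (∀ r s, r ≠ s → 1 ≤ x r s + x s r) ∧
    (∀ r s t, r ≠ s → s ≠ t → r ≠ t → x r s + x s t ≤ 1 + x r t) := by
  have hy0 : ∀ r u, 0 ≤ y r u := fun r u => by rcases hybin r u with h | h <;> simp [h]
  have hx0 : ∀ r s, r ≠ s → 0 ≤ x r s := fun r s h => by
    rcases hxbin r s h with h' | h' <;> simp [h']
  have hx1 : ∀ r s, r ≠ s → x r s ≤ 1 := fun r s h => by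
    rcases hxbin r s h with h' | h' <;> simp [h']
  have hbucket : ∀ r, ∃ u, y r u = 1 := by
    intro r
    by_contra h
    push_neg at h
    have hz : ∀ u, y r u = 0 := fun u => (hybin r u).resolve_right (h u)
    have := h1 r
    simp [hz] at this
  -- comparability
  have hcomp : ∀ r s, r ≠ s → 1 ≤ x r s + x s r := by
    intro r s hrs
    obtain ⟨a, ha⟩ := hbucket r
    rcases lt_or_gt_of_ne hrs with h | h
    · have := h2 r s h a
      have := hy0 s a
      linarith
    · have := h2 s r h a
      have := hy0 s a
      linarith
  -- strict order: later bucket cannot be before-or-tied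
  have hC : ∀ (r s : Fin n) (a b : Fin p), r ≠ s → y r a = 1 → y s b = 1 → b < a →
      x r s = 0 := by
    intro r s a b hrs ha hb hba
    have hblt : (b : ℕ) < p - 1 := by
      have h1 := a.isLt
      have h2 : (b : ℕ) < (a : ℕ) := hba
      omega
    have h := h3 s r hrs.symm b hblt
    have hS1 : (1 : ℝ) ≤ ∑ v ∈ univ.filter (fun v => v ≤ b), y s v := by
      have hmem : b ∈ univ.filter (fun v => v ≤ b) := by simp
      calc (1 : ℝ) = y s b := hb.symm
        _ ≤ _ := single_le_sum (fun i _ => hy0 s i) hmem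
    have hS2 : (1 : ℝ) ≤ ∑ v ∈ univ.filter (fun v => b < v), y r v := by
      have hmem : a ∈ univ.filter (fun v => b < v) := by simp [hba]
      calc (1 : ℝ) = y r a := ha.symm
        _ ≤ _ := single_le_sum (fun i _ => hy0 r i) hmem
    rcases hxbin r s hrs with h' | h'
    · exact h'
    · linarith
  refine ⟨hcomp, ?_⟩
  intro r s t hrs hst hrt
  rcases hxbin r s hrs with e | e
  · have := hx1 s t hst
    have := hx0 r t hrt
    linarith
  rcases hxbin s t hst with f | f
  · have := hx1 r s hrs
    have := hx0 r t hrt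
    linarith
  obtain ⟨a, ha⟩ := hbucket r
  obtain ⟨b, hb⟩ := hbucket s
  obtain ⟨c, hc⟩ := hbucket t
  have hab : ¬ b < a := fun h => by have := hC r s a b hrs ha hb h; linarith
  have hbc : ¬ c < b := fun h => by have := hC s t b c hst hb hc h; linarith
  have hac : a ≤ c := le_trans (not_lt.mp hab) (not_lt.mp hbc)
  rcases lt_or_eq_of_le hac with h | h
  · have htr : x t r = 0 := hC t r c a (Ne.symm hrt) hc ha h
    have := hcomp r t hrt
    linarith
  · have hta : y t a = 1 := by rw [h]; exact hc
    have hxtr := hx1 t r (Ne.symm hrt)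
    rcases lt_or_gt_of_ne hrt with hlt | hlt
    · have := h2 r t hlt a
      linarith
    · have := h2 t r hlt a
      linarith
end

section
/- Let n ≥ 1 and p ≥ 1. Let y = (y_{ru}) be binary variables with ∑_{u=1}^p y_{ru} = 1 for every r ∈ [[n]], and let x = (x_{rs}), r ≠ s, be real variables with 0 ≤ x_{rs} ≤ 1 satisfying: (ii) y_{ru} + y_{su} ≤ x_{rs} + x_{sr} for all r < s and all u ∈ [[p]]; and (iii) x_{sr} + ∑_{v=1}^{u} y_{rv} + ∑_{v=u+1}^{p} y_{sv} ≤ 2 for all r ≠ s and all u ∈ [[p−1]]. Then every x_{rs} takes a value in {0,1}; more precisely, writing β(r) for the unique bucket with y_{r,β(r)} = 1: if β(r) = β(s) then x_{rs} = x_{sr} = 1, and if β(r) < β(s) then x_{rs} = 1 and x_{sr} = 0. Hence the integrality constraints on the x-variables in the assignment-based p-bucket model can be relaxed. -/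
open Finset

/-- In the assignment-based p-bucket model, the integrality of the
x-variables can be relaxed: if the y-variables are binary with exactly one
bucket per item and the x-variables lie in [0,1] and satisfy the model
constraints, then every `x r s` is 0 or 1; moreover items in the same bucket
are tied and an item in an earlier bucket strictly precedes one in a later
bucket. -/
theorem stmt_6 (n p : ℕ) (hn : 1 ≤ n) (hp : 1 ≤ p)
    (x : Fin n → Fin n → ℝ) (y : Fin n → Fin p → ℝ)
    (hybin : ∀ r u, y r u = 0 ∨ y r u = 1)
    (h1 : ∀ r, ∑ u, y r u = 1)
    (hx01 : ∀ r s, r ≠ s → 0 ≤ x r s ∧ x r s ≤ 1)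
    (h2 : ∀ r s : Fin n, r < s → ∀ u : Fin p, y r u + y s u ≤ x r s + x s r)
    (h3 : ∀ r s : Fin n, r ≠ s → ∀ u : Fin p, (u : ℕ) < p - 1 →
      x s r + (∑ v ∈ univ.filter (fun v => v ≤ u), y r v) +
        (∑ v ∈ univ.filter (fun v => u < v), y s v) ≤ 2) :
    (∀ r s, r ≠ s → x r s = 0 ∨ x r s = 1) ∧
    (∀ r s, r ≠ s → ∀ br bs : Fin p, y r br = 1 → y s bs = 1 →
      (br = bs → x r s = 1 ∧ x s r = 1) ∧
      (br < bs → x r s = 1 ∧ x s r = 0)) := by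
  have hzero : ∀ r (br : Fin p), y r br = 1 → ∀ u, u ≠ br → y r u = 0 := by
    intro r br hbr u hu
    have hsum : ∑ v ∈ univ.erase br, y r v = 0 := by
      have h := h1 r
      rw [← Finset.add_sum_erase _ _ (mem_univ br), hbr] at h
      linarith
    have hnn : ∀ i ∈ univ.erase br, 0 ≤ y r i := by
      intro i _; rcases hybin r i with h | h <;> rw [h] <;> norm_num
    exact (Finset.sum_eq_zero_iff_of_nonneg hnn).mp hsum u (by simp [hu])
  have h2' : ∀ r s : Fin n, r ≠ s → ∀ u, y r u + y s u ≤ x r s + x s r := by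
    intro r s hrs u
    rcases lt_or_gt_of_ne hrs with h | h
    · exact h2 r s h u
    · have := h2 s r h u; linarith
  have hex : ∀ r, ∃ b, y r b = 1 := by
    intro r
    by_contra hc; push_neg at hc
    have hall : ∀ u ∈ (univ : Finset (Fin p)), y r u = 0 :=
      fun u _ => (hybin r u).resolve_right (hc u)
    have := h1 r
    rw [Finset.sum_eq_zero hall] at this
    norm_num at this
  have key : ∀ r s : Fin n, r ≠ s → ∀ br bs : Fin p, y r br = 1 → y s bs = 1 →
      (br = bs → x r s = 1 ∧ x s r = 1) ∧ (br < bs → x r s = 1 ∧ x s r = 0) := by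
    intro r s hrs br bs hbr hbs
    constructor
    · intro heq
      subst heq
      have h := h2' r s hrs br
      rw [hbr, hbs] at h
      obtain ⟨_, h4⟩ := hx01 r s hrs
      obtain ⟨_, h5⟩ := hx01 s r hrs.symm
      constructor <;> linarith
    · intro hlt
      have hbrp : (br : ℕ) < p - 1 := by
        have h1 := bs.isLt
        have h2 : (br : ℕ) < (bs : ℕ) := hlt
        omega
      have h3' := h3 r s hrs br hbrp
      have hsum1 : ∑ v ∈ univ.filter (fun v => v ≤ br), y r v = 1 := by
        rw [Finset.sum_eq_single_of_mem br (by simp)]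
        · exact hbr
        · intro b _ hne; exact hzero r br hbr b hne
      have hsum2 : ∑ v ∈ univ.filter (fun v => br < v), y s v = 1 := by
        rw [Finset.sum_eq_single_of_mem bs (by simp [hlt])]
        · exact hbs
        · intro b _ hne; exact hzero s bs hbs b hne
      rw [hsum1, hsum2] at h3'
      obtain ⟨hsr0, _⟩ := hx01 s r hrs.symm
      have hxsr : x s r = 0 := by linarith
      have hysbr : y s br = 0 := hzero s bs hbs br (ne_of_lt hlt)
      have h := h2' r s hrs br
      rw [hbr, hysbr, hxsr] at h
      obtain ⟨_, hrs1⟩ := hx01 r s hrs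
      exact ⟨by linarith, hxsr⟩
  refine ⟨?_, key⟩
  intro r s hrs
  obtain ⟨br, hbr⟩ := hex r
  obtain ⟨bs, hbs⟩ := hex s
  rcases lt_trichotomy br bs with h | h | h
  · exact Or.inr ((key r s hrs br bs hbr hbs).2 h).1
  · exact Or.inr ((key r s hrs br bs hbr hbs).1 h).1
  · exact Or.inl ((key s r hrs.symm bs br hbs hbr).2 h).2
end

section
/- Let n ≥ 1 and let x = (x_{rs}), r ≠ s in [[n]], be binary variables. Then x satisfies the comparability constraints x_{rs} + x_{sr} ≥ 1 (for all r ≠ s) and the transitivity constraints x_{rs} + x_{st} ≤ 1 + x_{rt} (for all pairwise distinct r, s, t) if and only if there exists a level function lvl : [[n]] → ℕ such that for all r ≠ s, x_{rs} = 1 ⟺ lvl(r) ≤ lvl(s). In other words, the feasible solutions of the base model are exactly the encodings of weak orders (bucket orders) on [[n]]. -/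
/-- A binary precedence encoding satisfies the comparability and
transitivity constraints iff it is the encoding of a weak order, i.e., there is
a level function `lvl` with `x r s = 1 ↔ lvl r ≤ lvl s` for all `r ≠ s`. -/
theorem stmt_12 (n : ℕ) (hn : 1 ≤ n)
    (x : Fin n → Fin n → ℝ)
    (hxbin : ∀ r s, r ≠ s → x r s = 0 ∨ x r s = 1) :
    ((∀ r s, r ≠ s → 1 ≤ x r s + x s r) ∧
     (∀ r s t, r ≠ s → s ≠ t → r ≠ t → x r s + x s t ≤ 1 + x r t)) ↔
    ∃ lvl : Fin n → ℕ, ∀ r s, r ≠ s → (x r s = 1 ↔ lvl r ≤ lvl s) := by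
  classical
  constructor
  · rintro ⟨hcomp, htrans⟩
    set R : Fin n → Fin n → Prop := fun r s => r = s ∨ x r s = 1 with hR
    have hRrefl : ∀ r, R r r := fun r => Or.inl rfl
    have hRtrans : ∀ r s t, R r s → R s t → R r t := by
      rintro r s t (rfl | h1) h2
      · exact h2
      rcases h2 with rfl | h2
      · exact Or.inr h1
      by_cases hrt : r = t
      · exact Or.inl hrt
      by_cases hrs : r = s
      · exact Or.inr (hrs ▸ h2)
      by_cases hst : s = t
      · exact Or.inr (hst ▸ h1)
      have := htrans r s t hrs hst hrt
      rw [h1, h2] at this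
      rcases hxbin r t hrt with h | h
      · rw [h] at this; norm_num at this
      · exact Or.inr h
    have hRtotal : ∀ r s, R r s ∨ R s r := by
      intro r s
      by_cases hrs : r = s
      · exact Or.inl (Or.inl hrs)
      have := hcomp r s hrs
      rcases hxbin r s hrs with h | h
      · rcases hxbin s r (Ne.symm hrs) with h' | h'
        · rw [h, h'] at this; norm_num at this
        · exact Or.inr (Or.inr h')
      · exact Or.inl (Or.inr h)
    set lvl : Fin n → ℕ := fun r =>
      (Finset.univ.filter (fun t => R t r ∧ ¬ R r t)).card with hlvl
    have hmono : ∀ r s, R r s → lvl r ≤ lvl s := by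
      intro r s hrs
      apply Finset.card_le_card
      intro t ht
      simp only [Finset.mem_filter, Finset.mem_univ, true_and] at ht ⊢
      exact ⟨hRtrans t r s ht.1 hrs, fun h => ht.2 (hRtrans r s t hrs h)⟩
    have hstrict : ∀ r s, ¬ R r s → lvl s < lvl r := by
      intro r s hns
      have hsr : R s r := (hRtotal r s).resolve_left hns
      apply Finset.card_lt_card
      constructor
      · intro t ht
        simp only [Finset.mem_filter, Finset.mem_univ, true_and] at ht ⊢
        exact ⟨hRtrans t s r ht.1 hsr, fun h => hns (hRtrans r t s h ht.1)⟩
      · intro hsub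
        have hmem : s ∈ Finset.univ.filter (fun t => R t r ∧ ¬ R r t) := by
          simp only [Finset.mem_filter, Finset.mem_univ, true_and]
          exact ⟨hsr, hns⟩
        have := hsub hmem
        simp only [Finset.mem_filter, Finset.mem_univ, true_and] at this
        exact this.2 (hRrefl s)
    refine ⟨lvl, fun r s hrs => ?_⟩
    constructor
    · intro h1; exact hmono r s (Or.inr h1)
    · intro hle
      by_contra hx
      have hnRrs : ¬ R r s := by
        rintro (h | h)
        · exact hrs h
        · exact hx h
      exact absurd hle (not_le.mpr (hstrict r s hnRrs))
  · rintro ⟨lvl, hlvl⟩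
    have hnonneg : ∀ r s, r ≠ s → (0:ℝ) ≤ x r s := by
      intro r s h; rcases hxbin r s h with h' | h' <;> rw [h'] <;> norm_num
    constructor
    · intro r s hrs
      rcases le_total (lvl r) (lvl s) with h | h
      · have := (hlvl r s hrs).mpr h
        rw [this]
        linarith [hnonneg s r (Ne.symm hrs)]
      · have := (hlvl s r (Ne.symm hrs)).mpr h
        rw [this]
        linarith [hnonneg r s hrs]
    · intro r s t hrs hst hrt
      rcases hxbin r s hrs with h1 | h1
      · rcases hxbin s t hst with h2 | h2 <;>
          rw [h1, h2] <;> linarith [hnonneg r t hrt]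
      · rcases hxbin s t hst with h2 | h2
        · rw [h1, h2]; linarith [hnonneg r t hrt]
        · have hrt1 : x r t = 1 := (hlvl r t hrt).mpr
            (le_trans ((hlvl r s hrs).mp h1) ((hlvl s t hst).mp h2))
          rw [h1, h2, hrt1]
end

section
/- Let n ≥ 1 and 1 ≤ k ≤ n. Let x = (x_{rs}), r ≠ s in [[n]], and z = (z_r), r ∈ [[n]], be binary variables satisfying x_{rs} + z_r ≤ 1 + z_s and x_{rs} ≥ z_s for all r ≠ s, together with ∑_{r=1}^n z_r = n − k. Then: (i) if z_r = z_s = 1 then x_{rs} = x_{sr} = 1 (all items of the tail bucket are tied with one another); and (ii) if z_r = 0 and z_s = 1 then x_{rs} = 1 and x_{sr} = 0 (every item outside the tail bucket is ranked strictly before every item inside it). Hence the tail-bucket constraints of the Tail-Collapsed Upper-k model enforce that the n − k items with z_r = 1 form a single last bucket placed after all other items. -/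
/-- In the Tail-Collapsed Upper-k model, (i) any two items of the
tail bucket are tied, and (ii) every item outside the tail bucket is ranked
strictly before every item inside it. -/
theorem stmt_15 (n k : ℕ) (hn : 1 ≤ n) (hk : 1 ≤ k) (hkn : k ≤ n)
    (x : Fin n → Fin n → ℝ) (z : Fin n → ℝ)
    (hxbin : ∀ r s, r ≠ s → x r s = 0 ∨ x r s = 1)
    (hzbin : ∀ r, z r = 0 ∨ z r = 1)
    (h1 : ∀ r s, r ≠ s → x r s + z r ≤ 1 + z s)
    (h2 : ∀ r s, r ≠ s → z s ≤ x r s)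
    (hsum : ∑ r, z r = (n : ℝ) - (k : ℝ)) :
    (∀ r s, r ≠ s → z r = 1 → z s = 1 → x r s = 1 ∧ x s r = 1) ∧
    (∀ r s, r ≠ s → z r = 0 → z s = 1 → x r s = 1 ∧ x s r = 0) := by
  constructor
  · intro r s hrs hr hs
    constructor
    · have := h2 r s hrs
      rcases hxbin r s hrs with h | h <;> [linarith; exact h]
    · have := h2 s r hrs.symm
      rcases hxbin s r hrs.symm with h | h <;> [linarith; exact h]
  · intro r s hrs hr hs
    constructor
    · have := h2 r s hrs
      rcases hxbin r s hrs with h | h <;> [linarith; exact h]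
    · have := h1 s r hrs.symm
      rcases hxbin s r hrs.symm with h | h <;> [exact h; linarith]
end

section
/- Let n ≥ 1 and p ≥ 1. Let x = (x_{rs}), r ≠ s in [[n]], and y = (y_{ru}), r ∈ [[n]], u ∈ [[p]], be binary variables satisfying all constraints of the assignment-based p-bucket model: (i) ∑_{u=1}^p y_{ru} = 1 for every r; (ii) ∑_{r=1}^n y_{ru} ≥ 1 for every u ∈ [[p]]; (iii) y_{ru} + y_{su} ≤ x_{rs} + x_{sr} for all r < s and all u; and (iv) x_{sr} + ∑_{v=1}^{u} y_{rv} + ∑_{v=u+1}^{p} y_{sv} ≤ 2 for all r ≠ s and all u ∈ [[p−1]]. Writing β(r) for the unique bucket with y_{r,β(r)} = 1, one has for all r ≠ s: x_{rs} = 1 ⟺ β(r) ≤ β(s). Consequently x encodes a weak order whose ordered buckets are the nonempty sets β^{-1}(1), …, β^{-1}(p), i.e., a bucket order with exactly p buckets. -/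
open Finset

/-- In the assignment-based p-bucket model (with nonempty
buckets), writing `br`, `bs` for the buckets of items `r`, `s`, one has
`x r s = 1 ↔ br ≤ bs` for all `r ≠ s`; hence `x` encodes the bucket order with
exactly `p` buckets given by `y`. -/
theorem stmt_17 (n p : ℕ) (hn : 1 ≤ n) (hp : 1 ≤ p)
    (x : Fin n → Fin n → ℝ) (y : Fin n → Fin p → ℝ)
    (hxbin : ∀ r s, r ≠ s → x r s = 0 ∨ x r s = 1)
    (hybin : ∀ r u, y r u = 0 ∨ y r u = 1)
    (h1 : ∀ r, ∑ u, y r u = 1)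
    (h2 : ∀ u : Fin p, 1 ≤ ∑ r, y r u)
    (h3 : ∀ r s : Fin n, r < s → ∀ u : Fin p, y r u + y s u ≤ x r s + x s r)
    (h4 : ∀ r s : Fin n, r ≠ s → ∀ u : Fin p, (u : ℕ) < p - 1 →
      x s r + (∑ v ∈ univ.filter (fun v => v ≤ u), y r v) +
        (∑ v ∈ univ.filter (fun v => u < v), y s v) ≤ 2) :
    ∀ r s, r ≠ s → ∀ br bs : Fin p, y r br = 1 → y s bs = 1 →
      (x r s = 1 ↔ br ≤ bs) := by
  have hy0 : ∀ r u, 0 ≤ y r u := by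
    intro r u; rcases hybin r u with h | h <;> rw [h]; · norm_num
  -- same bucket: x r s = 1
  have same : ∀ r s, r ≠ s → ∀ u : Fin p, y r u = 1 → y s u = 1 → x r s = 1 := by
    intro r s hrs u hr hs
    rcases hxbin r s hrs with hx | hx
    · exfalso
      rcases hxbin s r hrs.symm with hx' | hx'
      · rcases lt_or_gt_of_ne hrs with h | h
        · have := h3 r s h u; rw [hr, hs, hx, hx'] at this; linarith
        · have := h3 s r h u; rw [hr, hs, hx, hx'] at this; linarith
      · rcases lt_or_gt_of_ne hrs with h | h
        · have := h3 r s h u; rw [hr, hs, hx, hx'] at this; linarith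
        · have := h3 s r h u; rw [hr, hs, hx, hx'] at this; linarith
    · exact hx
  -- strictly earlier bucket: x s r = 0 and x r s = 1
  have key : ∀ r s, r ≠ s → ∀ br bs : Fin p, y r br = 1 → y s bs = 1 →
      br < bs → x s r = 0 ∧ x r s = 1 := by
    intro r s hrs br bs hr hs hlt
    have hbs : (bs : ℕ) < p := bs.isLt
    have hblt : (br : ℕ) < (bs : ℕ) := hlt
    have hu : (br : ℕ) < p - 1 := by omega
    have h4' := h4 r s hrs br hu
    have hA : (1 : ℝ) ≤ ∑ v ∈ univ.filter (fun v => v ≤ br), y r v := by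
      have hmem : br ∈ univ.filter (fun v => v ≤ br) := by
        simp [Finset.mem_filter]
      calc (1 : ℝ) = y r br := hr.symm
        _ ≤ _ := Finset.single_le_sum (fun i _ => hy0 r i) hmem
    have hB : (1 : ℝ) ≤ ∑ v ∈ univ.filter (fun v => br < v), y s v := by
      have hmem : bs ∈ univ.filter (fun v => br < v) := by
        simp [Finset.mem_filter, hlt]
      calc (1 : ℝ) = y s bs := hs.symm
        _ ≤ _ := Finset.single_le_sum (fun i _ => hy0 s i) hmem
    have hx0 : x s r = 0 := by
      rcases hxbin s r hrs.symm with hx | hx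
      · exact hx
      · exfalso; rw [hx] at h4'; linarith
    refine ⟨hx0, ?_⟩
    rcases hxbin r s hrs with hx | hx
    · exfalso
      rcases lt_or_gt_of_ne hrs with h | h
      · have := h3 r s h br
        rw [hr, hx, hx0] at this
        have := hy0 s br; linarith
      · have := h3 s r h br
        rw [hr, hx, hx0] at this
        have := hy0 s br; linarith
    · exact hx
  intro r s hrs br bs hr hs
  rcases lt_trichotomy br bs with h | h | h
  · exact ⟨fun _ => h.le, fun _ => (key r s hrs br bs hr hs h).2⟩
  · subst h
    exact ⟨fun _ => le_refl _, fun _ => same r s hrs br hr hs⟩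
  · have hk := key s r hrs.symm bs br hs hr h
    constructor
    · intro hx; rw [hk.1] at hx; norm_num at hx
    · intro hle; exact absurd hle (not_le.mpr h)
end

section
/- Let n ≥ 1 and let x = (x_{rs}), α = (α_r), β = (β_{rs}) (r < s) be binary variables satisfying the comparability constraints x_{rs} + x_{sr} ≥ 1 (r ≠ s), the transitivity constraints x_{rs} + x_{st} ≤ 1 + x_{rt} (r, s, t pairwise distinct), β_{rs} ≤ α_s (r < s), ∑_{s=r+1}^n β_{rs} + α_r = 1 (for all r), x_{rs} ≥ β_{rs} and x_{sr} ≥ β_{rs} (r < s), and x_{rs} + x_{sr} + α_r ≤ 2 (r < s). Define the tie relation r ~ s iff r = s or x_{rs} = x_{sr} = 1. Then for every item r, the largest-indexed item t of the tie class of r satisfies α_t = 1, every other item r' of that class satisfies α_{r'} = 0 and β_{r't} = 1, and hence each tie class (bucket) contains exactly one selected representative, namely its largest-indexed item; in particular, the number of buckets of the weak order encoded by x equals ∑_{r=1}^n α_r. -/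
open Finset

/-- In the representative-based p-bucket model, each tie class
(bucket) contains exactly one selected representative, namely its
largest-indexed item: the largest item `t` of the tie class of `r` has
`α t = 1`, every other item `r'` of the class has `α r' = 0` and `β r' t = 1`,
and the number of buckets equals `∑ α r`. -/
theorem stmt_18 (n : ℕ) (hn : 1 ≤ n)
    (x : Fin n → Fin n → ℝ) (a : Fin n → ℝ) (b : Fin n → Fin n → ℝ)
    (hxbin : ∀ r s, r ≠ s → x r s = 0 ∨ x r s = 1)
    (habin : ∀ r, a r = 0 ∨ a r = 1)
    (hbbin : ∀ r s : Fin n, r < s → b r s = 0 ∨ b r s = 1)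
    (hcomp : ∀ r s, r ≠ s → 1 ≤ x r s + x s r)
    (htrans : ∀ r s t, r ≠ s → s ≠ t → r ≠ t → x r s + x s t ≤ 1 + x r t)
    (hba : ∀ r s : Fin n, r < s → b r s ≤ a s)
    (hassign : ∀ r : Fin n,
      (∑ s ∈ univ.filter (fun s => r < s), b r s) + a r = 1)
    (hx1 : ∀ r s : Fin n, r < s → b r s ≤ x r s)
    (hx2 : ∀ r s : Fin n, r < s → b r s ≤ x s r)
    (hrep : ∀ r s : Fin n, r < s → x r s + x s r + a r ≤ 2) :
    (∀ r t : Fin n,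
      (r = t ∨ (x r t = 1 ∧ x t r = 1)) →
      (∀ s, (r = s ∨ (x r s = 1 ∧ x s r = 1)) → s ≤ t) →
      a t = 1 ∧
        ∀ r', (r = r' ∨ (x r r' = 1 ∧ x r' r = 1)) → r' ≠ t →
          a r' = 0 ∧ b r' t = 1) ∧
    ((Set.ncard {Bk : Set (Fin n) |
        ∃ r, Bk = {s | r = s ∨ (x r s = 1 ∧ x s r = 1)}} : ℝ) = ∑ r, a r) := by
  classical
  set R : Fin n → Fin n → Prop :=
    fun r s => r = s ∨ (x r s = 1 ∧ x s r = 1) with hRdef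
  have hRrefl : ∀ r, R r r := fun r => Or.inl rfl
  have hRsymm : ∀ {r s}, R r s → R s r := by
    rintro r s (rfl | ⟨h1, h2⟩)
    · exact Or.inl rfl
    · exact Or.inr ⟨h2, h1⟩
  have hRtrans : ∀ {r s t}, R r s → R s t → R r t := by
    intro r s t hrs hst
    rcases hrs with rfl | ⟨h1, h2⟩
    · exact hst
    rcases hst with rfl | ⟨h3, h4⟩
    · exact Or.inr ⟨h1, h2⟩
    rcases eq_or_ne r t with rfl | hrt
    · exact Or.inl rfl
    rcases eq_or_ne r s with rfl | hrs'
    · exact Or.inr ⟨h3, h4⟩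
    rcases eq_or_ne s t with rfl | hst'
    · exact Or.inr ⟨h1, h2⟩
    refine Or.inr ⟨?_, ?_⟩
    · have h := htrans r s t hrs' hst' hrt
      rcases hxbin r t hrt with h' | h'
      · rw [h1, h3, h'] at h; linarith
      · exact h'
    · have h := htrans t s r (Ne.symm hst') (Ne.symm hrs') (Ne.symm hrt)
      rcases hxbin t r (Ne.symm hrt) with h' | h'
      · rw [h4, h2, h'] at h; linarith
      · exact h'
  -- a tied, non-maximal item has a = 0
  have key1 : ∀ r s : Fin n, r < s → R r s → a r = 0 := by
    intro r s hlt hrs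
    rcases hrs with rfl | ⟨h1, h2⟩
    · exact absurd hlt (lt_irrefl _)
    have h := hrep r s hlt
    rcases habin r with h' | h'
    · exact h'
    · rw [h1, h2, h'] at h; linarith
  -- b r s = 1 (with r < s) implies R r s
  have keyb : ∀ r s : Fin n, r < s → b r s = 1 → R r s := by
    intro r s hlt hb
    have hne : r ≠ s := ne_of_lt hlt
    have h1 := hx1 r s hlt
    have h2 := hx2 r s hlt
    refine Or.inr ⟨?_, ?_⟩
    · rcases hxbin r s hne with h' | h'
      · rw [hb, h'] at h1; linarith
      · exact h'
    · rcases hxbin s r (Ne.symm hne) with h' | h'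
      · rw [hb, h'] at h2; linarith
      · exact h'
  have part1 : ∀ r t : Fin n, R r t → (∀ s, R r s → s ≤ t) →
      a t = 1 ∧ ∀ r', R r r' → r' ≠ t → a r' = 0 ∧ b r' t = 1 := by
    intro r t hrt hmax
    have hat : a t = 1 := by
      have hz : ∀ s ∈ univ.filter (fun s => t < s), b t s = 0 := by
        intro s hs
        simp only [mem_filter] at hs
        rcases hbbin t s hs.2 with h | h
        · exact h
        · exfalso
          have hRts : R t s := keyb t s hs.2 h
          have : R r s := hRtrans hrt hRts
          exact absurd (hmax s this) (not_le.mpr hs.2)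
      have h := hassign t
      rw [Finset.sum_eq_zero hz] at h
      linarith
    refine ⟨hat, ?_⟩
    intro r' hrr' hne
    have hr't : r' < t := lt_of_le_of_ne (hmax r' hrr') hne
    have hRr't : R r' t := hRtrans (hRsymm hrr') hrt
    have har' : a r' = 0 := key1 r' t hr't hRr't
    refine ⟨har', ?_⟩
    have hsum := hassign r'
    rw [har', add_zero] at hsum
    have hsingle : (∑ s ∈ univ.filter (fun s => r' < s), b r' s) = b r' t := by
      refine Finset.sum_eq_single_of_mem t (by simp [hr't]) ?_
      intro s hs hst
      simp only [mem_filter] at hs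
      rcases hbbin r' s hs.2 with h | h
      · exact h
      · exfalso
        have hRr's : R r' s := keyb r' s hs.2 h
        have hRrs : R r s := hRtrans hrr' hRr's
        have hslt : s < t := lt_of_le_of_ne (hmax s hRrs) hst
        have haz : a s = 0 := key1 s t hslt (hRtrans (hRsymm hRrs) (hRtrans hrr' hRr't))
        have hbs := hba r' s hs.2
        rw [h, haz] at hbs; linarith
    rw [hsingle] at hsum
    exact hsum
  refine ⟨part1, ?_⟩
  -- second part: counting
  have hSeq : {Bk : Set (Fin n) | ∃ r, Bk = {s | R r s}}
      = (fun r => {s | R r s}) '' {r | a r = 1} := by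
    ext Bk
    simp only [Set.mem_setOf_eq, Set.mem_image]
    constructor
    · rintro ⟨r, rfl⟩
      have hTne : (univ.filter (fun s => R r s)).Nonempty :=
        ⟨r, by simp [hRrefl r]⟩
      set t := (univ.filter (fun s => R r s)).max' hTne with ht
      have hmem : R r t := by
        have h := (univ.filter (fun s => R r s)).max'_mem hTne
        simpa using h
      have hmax : ∀ s, R r s → s ≤ t := fun s hs =>
        Finset.le_max' _ s (by simpa using hs)
      refine ⟨t, (part1 r t hmem hmax).1, ?_⟩
      ext s
      simp only [Set.mem_setOf_eq]
      exact ⟨fun h => hRtrans hmem h, fun h => hRtrans (hRsymm hmem) h⟩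
    · rintro ⟨r, _, rfl⟩
      exact ⟨r, rfl⟩
  have hinj : Set.InjOn (fun r => {s | R r s}) {r | a r = 1} := by
    intro r hr r' hr' heq
    by_contra hne
    have hRrr' : R r r' := by
      have h : r' ∈ (fun r => {s | R r s}) r' := hRrefl r'
      rw [← heq] at h
      exact h
    rcases lt_or_gt_of_ne hne with h | h
    · have h0 := key1 r r' h hRrr'
      have h1 : a r = 1 := hr
      linarith
    · have h0 := key1 r' r h (hRsymm hRrr')
      have h1 : a r' = 1 := hr'
      linarith
  have hset : {r : Fin n | a r = 1} = ↑(univ.filter (fun r => a r = 1)) := by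
    ext r; simp
  have hcard : Set.ncard {Bk : Set (Fin n) | ∃ r, Bk = {s | R r s}}
      = (univ.filter (fun r => a r = 1)).card := by
    rw [hSeq, Set.ncard_image_of_injOn hinj, hset, Set.ncard_coe_finset]
  have hsum : (∑ r, a r) = ((univ.filter (fun r => a r = 1)).card : ℝ) := by
    rw [← Finset.sum_boole]
    refine Finset.sum_congr rfl ?_
    intro r _
    rcases habin r with h | h
    · norm_num [h]
    · norm_num [h]
  rw [hcard, hsum]
end
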